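/- Let m ≥ 1, δ ∈ {0,1}, and n := 2m − δ. Let Ĵ_n be the ideal of ℛ generated by the four elements g₁ := ε^(1−δ)·ξ^(2m)·x − h^(1−δ)·F(2m−1), g₂ := F(2m+1), g₃ := h·x, and g₄ := (ξh)^(2m) − (−1)^m·(ξh)^δ·(ξ^(2m+1−δ)·x)². Let Ψ : ℛ → S be the ring homomorphism determined by ε ↦ ξ·w₁, ξ ↦ ξ, ζ ↦ ζ, h ↦ ξ·w₂, x ↦ ζ·f̄ₙ (this is well defined since 2·ξw₁ = 0 and ξζ−1 ↦ 0 in S). Then Ψ maps Ĵ_n into the ideal of S generated by the images of f̄(n+1) and w₂·f̄ n. (Proposition 4.6(i): Ψ(Ĵ_n) ⊆ J̄_n.) -/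
import Mathlib

set_option maxHeartbeats 1000000
set_option synthInstance.maxHeartbeats 400000

noncomputable section

open MvPolynomial

abbrev Rpre : Type := MvPolynomial (Fin 5) ℤ  -- ε, ξ, ζ, h, x

def RI : Ideal Rpre := Ideal.span {2 * X 0, X 1 * X 2 - 1}

abbrev R : Type := Rpre ⧸ RI

def ε : R := Ideal.Quotient.mk RI (X 0)
def ξ : R := Ideal.Quotient.mk RI (X 1)
def ζ : R := Ideal.Quotient.mk RI (X 2)
def h : R := Ideal.Quotient.mk RI (X 3)
def x : R := Ideal.Quotient.mk RI (X 4)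

def F : ℕ → R
  | 0 => 1
  | 1 => ε
  | m + 2 => ε * F (m + 1) + (ξ * h) * F m

abbrev Spre : Type := MvPolynomial (Fin 4) (ZMod 2)  -- ξ, ζ, w₁, w₂

def SI : Ideal Spre := Ideal.span {X 0 * X 1 - 1}

abbrev S : Type := Spre ⧸ SI

def ξS : S := Ideal.Quotient.mk SI (X 0)
def ζS : S := Ideal.Quotient.mk SI (X 1)
def w₁ : S := Ideal.Quotient.mk SI (X 2)
def w₂ : S := Ideal.Quotient.mk SI (X 3)

def fbar : ℕ → S
  | 0 => 1
  | 1 => w₁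
  | n + 2 => w₁ * fbar (n + 1) + w₂ * fbar n

lemma two_S : (2 : S) = 0 := by
  have h1 : ((2:ℕ) : Spre) = 0 := CharP.cast_eq_zero Spre 2
  have h2 : ((2:ℕ) : S) = 0 := by
    rw [← map_natCast (Ideal.Quotient.mk SI) 2, h1, map_zero]
  simpa using h2

lemma xz_S : ξS * ζS = 1 := by
  have h0 : Ideal.Quotient.mk SI (X 0 * X 1 - 1) = 0 :=
    Ideal.Quotient.eq_zero_iff_mem.mpr (Ideal.subset_span rfl)
  rw [map_sub, map_mul, map_one, sub_eq_zero] at h0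
  exact h0

lemma neg_one_S : (-1 : S) = 1 := by linear_combination -two_S

lemma fbar_rec (n : ℕ) : fbar (n + 2) = w₁ * fbar (n + 1) + w₂ * fbar n := rfl

lemma cassini : ∀ n : ℕ, fbar (n + 2) * fbar n + w₂ ^ (n + 1) = fbar (n + 1) ^ 2
  | 0 => by
      show (w₁ * w₁ + w₂ * 1) * 1 + w₂ ^ 1 = w₁ ^ 2
      linear_combination w₂ * two_S
  | (k + 1) => by
      have ih := cassini k
      show fbar (k + 3) * fbar (k + 1) + w₂ ^ (k + 2) = fbar (k + 2) ^ 2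
      have r1 : fbar (k + 3) = w₁ * fbar (k + 2) + w₂ * fbar (k + 1) := fbar_rec (k + 1)
      have r0 : fbar (k + 2) = w₁ * fbar (k + 1) + w₂ * fbar k := fbar_rec k
      linear_combination fbar (k+1) * r1 - fbar (k+2) * r0 - w₂ * ih + w₂ ^ (k+2) * two_S

lemma PsiF (Ψ : R →+* S) (hΨε : Ψ ε = ξS * w₁) (hΨξ : Ψ ξ = ξS) (hΨh : Ψ h = ξS * w₂) :
    ∀ k, Ψ (F k) = ξS ^ k * fbar k
  | 0 => by simp [F, fbar]
  | 1 => by simp [F, fbar, hΨε]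
  | (k + 2) => by
      have ih1 := PsiF Ψ hΨε hΨξ hΨh (k + 1)
      have ih0 := PsiF Ψ hΨε hΨξ hΨh k
      show Ψ (ε * F (k+1) + (ξ * h) * F k) = ξS ^ (k+2) * fbar (k+2)
      rw [map_add, map_mul, map_mul, map_mul, hΨε, hΨξ, hΨh, ih1, ih0, fbar_rec]
      ring

theorem Psi_maps_Jhat_into_Jbar (m : ℕ) (hm : 1 ≤ m) (δ : ℕ) (hδ : δ = 0 ∨ δ = 1)
    (Ψ : R →+* S)
    (hΨε : Ψ ε = ξS * w₁) (hΨξ : Ψ ξ = ξS) (hΨζ : Ψ ζ = ζS)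
    (hΨh : Ψ h = ξS * w₂) (hΨx : Ψ x = ζS * fbar (2 * m - δ)) :
    ∀ a ∈ Ideal.span ({ε ^ (1 - δ) * ξ ^ (2 * m) * x - h ^ (1 - δ) * F (2 * m - 1),
          F (2 * m + 1), h * x,
          (ξ * h) ^ (2 * m) - (-1 : R) ^ m * (ξ * h) ^ δ * (ξ ^ (2 * m + 1 - δ) * x) ^ 2} :
        Set R),
      Ψ a ∈ Ideal.span {fbar (2 * m - δ + 1), w₂ * fbar (2 * m - δ)} := by
  obtain ⟨k, rfl⟩ : ∃ k, m = k + 1 := ⟨m - 1, by omega⟩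
  have hF := PsiF Ψ hΨε hΨξ hΨh
  have hneg : Ψ (-1 : R) = 1 := by rw [map_neg, map_one, neg_one_S]
  have h2 := two_S
  have hxz := xz_S
  have e1 : 2 * (k + 1) - 1 = 2 * k + 1 := by omega
  have e2 : 2 * (k + 1) = 2 * k + 2 := by omega
  have e3 : 2 * (k + 1) + 1 = 2 * k + 3 := by omega
  have e4 : 2 * (k + 1) + 1 - 1 = 2 * k + 2 := by omega
  have e5 : 2 * (k + 1) - 1 + 1 = 2 * k + 2 := by omega
  have s1 : 2 * k + 2 - 1 = 2 * k + 1 := by omega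
  have s2 : 2 * k + 3 - 1 = 2 * k + 2 := by omega
  have s3 : 2 * k + 1 + 1 = 2 * k + 2 := by omega
  have s4 : 2 * k + 2 + 1 = 2 * k + 3 := by omega
  have r1 : fbar (2*k + 3) = w₁ * fbar (2*k + 2) + w₂ * fbar (2*k + 1) := fbar_rec (2*k + 1)
  have cas1 : fbar (2*k + 3) * fbar (2*k + 1) + w₂ ^ (2*k + 2) = fbar (2*k + 2) ^ 2 := by
    have := cassini (2*k + 1)
    rwa [show 2*k+1+2 = 2*k+3 from by omega, show 2*k+1+1 = 2*k+2 from by omega] at this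
  have cas0 : fbar (2*k + 2) * fbar (2*k) + w₂ ^ (2*k + 1) = fbar (2*k + 1) ^ 2 := by
    have := cassini (2*k)
    rwa [show 2*k+2 = 2*k+2 from rfl] at this
  intro a ha
  have key : Ideal.span ({ε ^ (1 - δ) * ξ ^ (2 * (k+1)) * x - h ^ (1 - δ) * F (2 * (k+1) - 1),
          F (2 * (k+1) + 1), h * x,
          (ξ * h) ^ (2 * (k+1)) - (-1 : R) ^ (k+1) * (ξ * h) ^ δ * (ξ ^ (2 * (k+1) + 1 - δ) * x) ^ 2} :
        Set R) ≤
      Ideal.comap Ψ (Ideal.span {fbar (2 * (k+1) - δ + 1), w₂ * fbar (2 * (k+1) - δ)}) := by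
    rw [Ideal.span_le]
    rintro g hg
    simp only [Set.mem_insert_iff, Set.mem_singleton_iff] at hg
    simp only [SetLike.mem_coe, Ideal.mem_comap]
    rcases hδ with rfl | rfl
    · -- δ = 0
      simp only [Nat.sub_zero] at hΨx ⊢
      rw [e2] at hΨx
      rcases hg with rfl | rfl | rfl | rfl
      · simp only [Nat.sub_zero, pow_one, map_sub, map_mul, map_pow, hΨε, hΨξ, hΨx, hΨh, hF,
          e1, e2, e3, s1, s2, s3, s4]
        refine Ideal.mem_span_pair.mpr ⟨ξS ^ (2*k+2), 0, ?_⟩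
        linear_combination ξS^(2*k+2) * r1 - (ξS^(2*k+2) * w₁ * fbar (2*k+2)) * hxz +
          (ξS^(2*k+2) * w₂ * fbar (2*k+1)) * h2
      · simp only [hF, e3]
        exact Ideal.mem_span_pair.mpr ⟨ξS ^ (2*k+3), 0, by ring⟩
      · simp only [map_mul, hΨh, hΨx]
        exact Ideal.mem_span_pair.mpr ⟨0, ξS * ζS, by ring⟩
      · simp only [Nat.sub_zero, pow_zero, map_sub, map_mul, map_pow, map_one, hΨξ, hΨh, hΨx,
          hneg, one_pow, one_mul, mul_one, e2, e3]
        refine Ideal.mem_span_pair.mpr ⟨-((ξS^(2*k+3))^2 * ζS^2 * fbar (2*k+1)), 0, ?_⟩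
        linear_combination (w₂^(2*k+2) * ξS^(4*k+4) * (1 + ξS * ζS)) * hxz -
          ((ξS^(2*k+3))^2 * ζS^2) * cas1
    · -- δ = 1
      simp only [e1] at hΨx
      simp only [e1, e4, e5, s1, s2, s3, s4] at hg ⊢
      rcases hg with rfl | rfl | rfl | rfl
      · simp only [Nat.sub_self, pow_zero, one_mul, map_sub, map_mul, map_pow, hΨξ, hΨx, hF, e1, e2, s1, s2, s3, s4]
        refine Ideal.mem_span_pair.mpr ⟨0, 0, ?_⟩
        linear_combination (-(ξS^(2*k+1) * fbar (2*k+1))) * hxz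
      · simp only [hF, e3]
        refine Ideal.mem_span_pair.mpr ⟨ξS^(2*k+3) * w₁, ξS^(2*k+3), ?_⟩
        linear_combination -ξS^(2*k+3) * r1
      · simp only [map_mul, hΨh, hΨx]
        exact Ideal.mem_span_pair.mpr ⟨0, ξS * ζS, by ring⟩
      · simp only [pow_one, map_sub, map_mul, map_pow, hΨξ, hΨh, hΨx, hneg, one_pow, one_mul,
          e2, e4, s1, s2, s3, s4]
        refine Ideal.mem_span_pair.mpr ⟨-((ξS^(2*k+3))^2 * ζS^2 * w₂ * fbar (2*k)), 0, ?_⟩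
        linear_combination (w₂^(2*k+2) * ξS^(4*k+4) * (1 + ξS * ζS)) * hxz -
          ((ξS^(2*k+3))^2 * w₂ * ζS^2) * cas0
  exact Ideal.mem_comap.mp (key ha)
end
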